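/- arXiv:1609.07274 — 5 statements merged into one kernel-verified Lean document; each statement's English description precedes it below -/
import Mathlib

section
/- Let R be a finite non-commutative ring of order n with Z(R) = {0}. Then γ(Γ(R)) + γ(Γ̄(R)) = n if and only if R is isomorphic to E or to F (in particular n = 4). -/
open scoped Classical

noncomputable section

/-- The commuting graph of a (non-unital, possibly non-commutative) ring `R`:
vertices are the non-central elements, and two distinct vertices are adjacent
iff they commute. -/
def commutingGraph (R : Type*) [NonUnitalRing R] :
    SimpleGraph {x : R // x ∉ Set.center R} where
  Adj a b := a ≠ b ∧ (a : R) * b = (b : R) * a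
  symm := ⟨by rintro a b ⟨h1, h2⟩; exact ⟨h1.symm, h2.symm⟩⟩
  loopless := ⟨by rintro a ⟨h, -⟩; exact h rfl⟩

/-- A dominating set: every vertex not in `D` is adjacent to some vertex of `D`. -/
def SimpleGraph.IsDominatingSet {V : Type*} (G : SimpleGraph V) (D : Finset V) : Prop :=
  ∀ v, v ∉ D → ∃ u ∈ D, G.Adj u v

/-- The domination number: the minimum cardinality of a dominating set. -/
noncomputable def SimpleGraph.dominationNumber {V : Type*} [Fintype V] (G : SimpleGraph V) : ℕ :=
  sInf {n | ∃ D : Finset V, G.IsDominatingSet D ∧ D.card = n}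

/-- The signed domination number: the minimum total weight of a function
`f : V → {-1, 1}` whose sum over every closed neighbourhood is at least `1`. -/
noncomputable def SimpleGraph.signedDominationNumber {V : Type*} [Fintype V]
    (G : SimpleGraph V) : ℤ :=
  sInf {w : ℤ | ∃ f : V → ℤ, (∀ v, f v = 1 ∨ f v = -1) ∧
    (∀ v : V, 1 ≤ ∑ u ∈ Finset.univ.filter (fun u => G.Adj v u ∨ u = v), f u) ∧
    w = ∑ v, f v}

/-- Underlying type of the ring `E`. -/
def Ering : Type := ZMod 2 × ZMod 2

instance : Fintype Ering := inferInstanceAs (Fintype (ZMod 2 × ZMod 2))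
instance : DecidableEq Ering := inferInstanceAs (DecidableEq (ZMod 2 × ZMod 2))
instance : AddCommGroup Ering := inferInstanceAs (AddCommGroup (ZMod 2 × ZMod 2))
instance : Mul Ering := ⟨fun a b => (b.1 * a.1, b.1 * a.2)⟩

/-- `E = ⟨x,y : 2x=2y=0, x²=x, y²=y, xy=x, yx=y⟩`, realized on `ZMod 2 × ZMod 2`
with `x = (1,0)`, `y = (1,1)` and multiplication `a * b = (b₁a₁, b₁a₂)`. -/
instance : NonUnitalRing Ering :=
  { (inferInstance : AddCommGroup Ering), (inferInstance : Mul Ering) with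
    left_distrib := by decide
    right_distrib := by decide
    zero_mul := by decide
    mul_zero := by decide
    mul_assoc := by decide }

/-- Underlying type of the ring `F`. -/
def Fring : Type := ZMod 2 × ZMod 2

instance : Fintype Fring := inferInstanceAs (Fintype (ZMod 2 × ZMod 2))
instance : DecidableEq Fring := inferInstanceAs (DecidableEq (ZMod 2 × ZMod 2))
instance : AddCommGroup Fring := inferInstanceAs (AddCommGroup (ZMod 2 × ZMod 2))
instance : Mul Fring := ⟨fun a b => (a.1 * b.1, a.1 * b.2)⟩

/-- `F = ⟨x,y : 2x=2y=0, x²=x, y²=y, xy=y, yx=x⟩`, realized on `ZMod 2 × ZMod 2`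
with `x = (1,0)`, `y = (1,1)` and multiplication `a * b = (a₁b₁, a₁b₂)`. -/
instance : NonUnitalRing Fring :=
  { (inferInstance : AddCommGroup Fring), (inferInstance : Mul Fring) with
    left_distrib := by decide
    right_distrib := by decide
    zero_mul := by decide
    mul_zero := by decide
    mul_assoc := by decide }

/-! Call the non-central elements vertices; there are `n - 1` of them. For any graph on
`m ≥ 1` vertices, `γ(G) + γ(Gᶜ) = m + 1` exactly when `G` is empty or complete: otherwise a
vertex adjacent to everything gives `γ ≤ 1` on one side and an edge gives `γ ≤ m - 1` on the other,
and if there is no such vertex Ore's bound `2γ ≤ m` applies to both graphs. The commuting graph of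
a non-commutative ring is never complete, and it is empty exactly when distinct nonzero elements
never commute.

Such a ring has characteristic `2` (`x` commutes with `-x`) and contains a nonzero idempotent `e`
(otherwise all squares vanish and `xy + yx = (x + y)²` forces commutativity). In the Peirce
decomposition `x = exe + (ex - exe) + (xe - exe)` the corner `exe` commutes with `e`, so it is `0`
or `e`; the elements of each off-diagonal piece commute with each other, so each piece has at most
one nonzero element; and the two pieces cannot both be nonzero. Hence `R = {0, e, u, e + u}`,
which is `F` when `eu = u, ue = 0` and `E`, the opposite ring of `F`, when `ue = u, eu = 0`. -/

namespace SimpleGraph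

variable {V : Type*} [Fintype V] (G : SimpleGraph V)

theorem isDominatingSet_univ : G.IsDominatingSet Finset.univ :=
  fun v hv => absurd (Finset.mem_univ v) hv

theorem dominationNumber_le {D : Finset V} (hD : G.IsDominatingSet D) :
    G.dominationNumber ≤ D.card :=
  Nat.sInf_le ⟨D, hD, rfl⟩

theorem exists_isDominatingSet_card_eq_dominationNumber :
    ∃ D : Finset V, G.IsDominatingSet D ∧ D.card = G.dominationNumber :=
  Nat.sInf_mem (s := {n | ∃ D : Finset V, G.IsDominatingSet D ∧ D.card = n})
    ⟨_, Finset.univ, G.isDominatingSet_univ, rfl⟩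

theorem dominationNumber_le_card : G.dominationNumber ≤ Fintype.card V :=
  G.dominationNumber_le G.isDominatingSet_univ

theorem dominationNumber_le_one_of_forall_adj {v : V} (hv : ∀ u, u ≠ v → G.Adj v u) :
    G.dominationNumber ≤ 1 :=
  G.dominationNumber_le (D := {v}) fun u hu =>
    ⟨v, Finset.mem_singleton_self v, hv u fun h => hu (h ▸ Finset.mem_singleton_self v)⟩

theorem dominationNumber_le_card_sub_one_of_adj {x y : V} (h : G.Adj x y) :
    G.dominationNumber ≤ Fintype.card V - 1 := by
  have hD : G.IsDominatingSet (Finset.univ.erase y) := fun v hv => by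
    obtain rfl : v = y := by simpa using hv
    exact ⟨x, Finset.mem_erase.2 ⟨h.ne, Finset.mem_univ x⟩, h⟩
  simpa [Finset.card_erase_of_mem] using G.dominationNumber_le hD

theorem two_mul_dominationNumber_le_card (h : ∀ v, ∃ u, G.Adj v u) :
    2 * G.dominationNumber ≤ Fintype.card V := by
  obtain ⟨D, hD, hcard⟩ := G.exists_isDominatingSet_card_eq_dominationNumber
  -- By minimality of `D`, each `v ∈ D` either has no neighbour in `D`, so its neighbour lies in
  -- `Dᶜ`, or is the only neighbour in `D` of some `w ∉ D`; so `Dᶜ` dominates as well.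
  have hcompl : G.IsDominatingSet Dᶜ := by
    intro v hv
    have hvD : v ∈ D := by simpa using hv
    have hmin : ¬ G.IsDominatingSet (D.erase v) := fun hd => by
      have := G.dominationNumber_le hd
      rw [Finset.card_erase_of_mem hvD, hcard] at this
      have := Finset.card_pos.2 ⟨v, hvD⟩
      omega
    simp only [IsDominatingSet, not_forall, not_exists, not_and] at hmin
    obtain ⟨w, hw, hwD⟩ := hmin
    by_cases hwv : w = v
    · subst hwv
      obtain ⟨u, hu⟩ := h w
      refine ⟨u, Finset.mem_compl.2 fun huD => hwD u (Finset.mem_erase.2 ⟨hu.ne', huD⟩) hu.symm,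
        hu.symm⟩
    · have hwD' : w ∉ D := fun h => hw (Finset.mem_erase.2 ⟨hwv, h⟩)
      obtain ⟨d, hd, hdw⟩ := hD w hwD'
      obtain rfl : d = v := by_contra fun hdv => hwD d (Finset.mem_erase.2 ⟨hdv, hd⟩) hdw
      exact ⟨w, Finset.mem_compl.2 hwD', hdw.symm⟩
  have := G.dominationNumber_le hcompl
  rw [Finset.card_compl, hcard] at this
  have := G.dominationNumber_le_card
  omega

@[simp]
theorem dominationNumber_bot : (⊥ : SimpleGraph V).dominationNumber = Fintype.card V := by
  obtain ⟨D, hD, hcard⟩ := (⊥ : SimpleGraph V).exists_isDominatingSet_card_eq_dominationNumber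
  have : D = Finset.univ := Finset.eq_univ_iff_forall.2 fun v => by
    by_contra hv
    obtain ⟨u, -, huv⟩ := hD v hv
    exact huv
  rw [← hcard, this, Finset.card_univ]

@[simp]
theorem dominationNumber_top [Nonempty V] : (⊤ : SimpleGraph V).dominationNumber = 1 := by
  obtain ⟨v⟩ := ‹Nonempty V›
  refine le_antisymm (dominationNumber_le_one_of_forall_adj _ (v := v) fun u hu => hu.symm) ?_
  obtain ⟨D, hD, hcard⟩ := (⊤ : SimpleGraph V).exists_isDominatingSet_card_eq_dominationNumber
  rw [← hcard, Nat.one_le_iff_ne_zero, Ne, Finset.card_eq_zero]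
  rintro rfl
  simpa using hD v

theorem dominationNumber_add_compl_le_card_of_forall_adj {v : V} (hv : ∀ u, u ≠ v → G.Adj v u)
    {x y : V} (hxy : Gᶜ.Adj x y) :
    G.dominationNumber + Gᶜ.dominationNumber ≤ Fintype.card V := by
  have := G.dominationNumber_le_one_of_forall_adj hv
  have := Gᶜ.dominationNumber_le_card_sub_one_of_adj hxy
  have : 0 < Fintype.card V := Fintype.card_pos_iff.2 ⟨x⟩
  omega

theorem dominationNumber_add_compl_eq_card_add_one_iff [Nonempty V] :
    G.dominationNumber + Gᶜ.dominationNumber = Fintype.card V + 1 ↔ G = ⊥ ∨ G = ⊤ := by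
  refine ⟨fun h => ?_, ?_⟩
  · by_contra! hG
    obtain ⟨x, y, hxy⟩ := ne_bot_iff_exists_adj.1 hG.1
    obtain ⟨x', y', hxy'⟩ := ne_bot_iff_exists_adj.1 (compl_eq_bot.not.2 hG.2)
    suffices G.dominationNumber + Gᶜ.dominationNumber ≤ Fintype.card V by omega
    by_cases hGuniv : ∃ v, ∀ u, u ≠ v → G.Adj v u
    · obtain ⟨v, hv⟩ := hGuniv
      exact G.dominationNumber_add_compl_le_card_of_forall_adj hv hxy'
    by_cases hGcuniv : ∃ v, ∀ u, u ≠ v → Gᶜ.Adj v u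
    · obtain ⟨v, hv⟩ := hGcuniv
      have := Gᶜ.dominationNumber_add_compl_le_card_of_forall_adj hv (x := x) (y := y)
        (by rwa [compl_compl])
      rwa [compl_compl, add_comm] at this
    push Not at hGuniv hGcuniv
    have hGnbr : ∀ v, ∃ u, G.Adj v u := fun v => by
      obtain ⟨u, huv, hu⟩ := hGcuniv v
      exact ⟨u, by simpa [huv.symm] using hu⟩
    have hGcnbr : ∀ v, ∃ u, Gᶜ.Adj v u := fun v => by
      obtain ⟨u, huv, hu⟩ := hGuniv v
      exact ⟨u, by simpa [huv.symm] using hu⟩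
    have := G.two_mul_dominationNumber_le_card hGnbr
    have := Gᶜ.two_mul_dominationNumber_le_card hGcnbr
    omega
  · rintro (rfl | rfl) <;> simp [add_comm]

end SimpleGraph

theorem ZMod.two_eq_zero_or_eq_one (a : ZMod 2) : a = 0 ∨ a = 1 := by
  revert a; decide

theorem nonempty_ringEquiv_Fring_of_basis {R : Type*} [NonUnitalRing R]
    (h2 : ∀ x : R, x + x = 0) {e u : R} (he0 : e ≠ 0) (hu0 : u ≠ 0) (he : e * e = e)
    (heu : e * u = u) (hue : u * e = 0)
    (hspan : ∀ x : R, x = 0 ∨ x = e ∨ x = u ∨ x = e + u) :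
    Nonempty (R ≃+* Fring) := by
  let _ : Module (ZMod 2) R := AddCommGroup.zmodModule fun x => (two_nsmul x).trans (h2 x)
  have huu : u * u = 0 := by
    calc u * u = u * e * u := by rw [mul_assoc, heu]
      _ = 0 := by rw [hue, zero_mul]
  let g : Fring →ₙ+* R :=
    { toFun := fun p => p.1 • e + p.2 • u
      map_zero' := by
        change (0 : ZMod 2) • e + (0 : ZMod 2) • u = 0
        simp
      map_add' := by
        rintro ⟨a, b⟩ ⟨c, d⟩
        change (a + c) • e + (b + d) • u = (a • e + b • u) + (c • e + d • u)
        rw [add_smul, add_smul]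
        abel
      map_mul' := by
        rintro ⟨a, b⟩ ⟨c, d⟩
        change (a * c) • e + (a * d) • u = (a • e + b • u) * (c • e + d • u)
        rcases a.two_eq_zero_or_eq_one with rfl | rfl <;>
        rcases b.two_eq_zero_or_eq_one with rfl | rfl <;>
        rcases c.two_eq_zero_or_eq_one with rfl | rfl <;>
        rcases d.two_eq_zero_or_eq_one with rfl | rfl <;>
          simp [he, heu, hue, huu, add_mul, mul_add, h2] }
  have hinj : Function.Injective g := by
    refine (injective_iff_map_eq_zero g).2 ?_
    rintro ⟨a, b⟩ h
    change a • e + b • u = 0 at h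
    rcases a.two_eq_zero_or_eq_one with rfl | rfl <;>
    rcases b.two_eq_zero_or_eq_one with rfl | rfl
    · rfl
    · exact absurd (by simpa using h) hu0
    · exact absurd (by simpa using h) he0
    · refine absurd ?_ he0
      simpa [add_mul, he, hue] using congrArg (· * e) h
  have hsurj : Function.Surjective g := by
    intro x
    rcases hspan x with rfl | rfl | rfl | rfl
    · exact ⟨0, g.map_zero⟩
    · exact ⟨(1, 0), show (1 : ZMod 2) • x + (0 : ZMod 2) • u = x by simp⟩
    · exact ⟨(0, 1), show (0 : ZMod 2) • e + (1 : ZMod 2) • x = x by simp⟩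
    · exact ⟨(1, 1), show (1 : ZMod 2) • e + (1 : ZMod 2) • u = e + u by simp⟩
  exact ⟨(RingEquiv.ofBijective g ⟨hinj, hsurj⟩).symm⟩

theorem nonempty_ringEquiv_Ering_of_op {R : Type*} [NonUnitalRing R]
    (h : Nonempty (Rᵐᵒᵖ ≃+* Fring)) : Nonempty (R ≃+* Ering) := by
  obtain ⟨φ⟩ := h
  -- `Ering` is the opposite ring of `Fring`, on the same carrier.
  let ψ : Fringᵐᵒᵖ ≃+* Ering :=
    { toFun := fun p => (MulOpposite.unop p : ZMod 2 × ZMod 2)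
      invFun := fun p => MulOpposite.op (p : ZMod 2 × ZMod 2)
      left_inv := fun _ => rfl
      right_inv := fun _ => rfl
      map_mul' := fun _ _ => rfl
      map_add' := fun _ _ => rfl }
  exact ⟨(RingEquiv.unop (φ.trans (RingEquiv.opOp Fring))).trans ψ⟩

def PairwiseNoncommuting (R : Type*) [Mul R] [Zero R] : Prop :=
  ∀ x y : R, x * y = y * x → x = 0 ∨ y = 0 ∨ x = y

namespace PairwiseNoncommuting

theorem op {R : Type*} [Mul R] [Zero R] (hR : PairwiseNoncommuting R) :
    PairwiseNoncommuting Rᵐᵒᵖ := fun x y hxy => by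
  rcases hR x.unop y.unop (congrArg MulOpposite.unop hxy.symm) with h | h | h
  exacts [Or.inl ((MulOpposite.unop_eq_zero_iff _).1 h),
    Or.inr (Or.inl ((MulOpposite.unop_eq_zero_iff _).1 h)),
    Or.inr (Or.inr (MulOpposite.unop_injective h))]

theorem of_ringEquiv {R S : Type*} [NonUnitalNonAssocSemiring R] [NonUnitalNonAssocSemiring S]
    (φ : R ≃+* S) (hS : PairwiseNoncommuting S) : PairwiseNoncommuting R := fun x y hxy => by
  rcases hS (φ x) (φ y) (by rw [← map_mul, hxy, map_mul]) with h | h | h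
  exacts [Or.inl ((map_eq_zero_iff φ φ.injective).1 h),
    Or.inr (Or.inl ((map_eq_zero_iff φ φ.injective).1 h)), Or.inr (Or.inr (φ.injective h))]

theorem ering : PairwiseNoncommuting Ering := by
  unfold PairwiseNoncommuting; decide

theorem fring : PairwiseNoncommuting Fring := by
  unfold PairwiseNoncommuting; decide

variable {R : Type*} [NonUnitalRing R]

theorem add_self (hR : PairwiseNoncommuting R) (x : R) : x + x = 0 := by
  rcases hR (-x) x (by rw [neg_mul, mul_neg]) with h | h | h
  · rw [neg_eq_zero.1 h, add_zero]
  · rw [h, add_zero]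
  · exact neg_eq_iff_add_eq_zero.1 h

theorem exists_idempotent (hR : PairwiseNoncommuting R) (hnc : ∃ x y : R, x * y ≠ y * x) :
    ∃ e : R, e ≠ 0 ∧ e * e = e := by
  by_contra! hno
  have hsq : ∀ x : R, x * x = 0 := fun x => by
    rcases hR (x * x) x (mul_assoc x x x) with h | rfl | h
    · exact h
    · exact mul_zero 0
    · by_contra hx
      exact hno x (fun h0 => hx (by rw [h0, mul_zero])) h
  obtain ⟨x, y, hxy⟩ := hnc
  have hxy' : x * y + y * x = 0 := by
    have := hsq (x + y)
    rwa [add_mul, mul_add, mul_add, hsq, hsq, zero_add, add_zero] at this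
  exact hxy (by rw [← neg_eq_of_add_eq_zero_right hxy', neg_eq_of_add_eq_zero_left (hR.add_self _)])

variable {e : R}

theorem eq_zero_of_mul_eq_zero_of_mul_eq_zero (hR : PairwiseNoncommuting R) (he0 : e ≠ 0)
    (he : e * e = e) {d : R} (hed : e * d = 0) (hde : d * e = 0) : d = 0 := by
  rcases hR d e (hde.trans hed.symm) with h | h | rfl
  exacts [h, absurd h he0, absurd (he.symm.trans hed) he0]

theorem eq_zero_or_eq_of_commute (hR : PairwiseNoncommuting R) (he0 : e ≠ 0) {a : R}
    (h : a * e = e * a) : a = 0 ∨ a = e :=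
  (hR a e h).imp_right (Or.resolve_left · he0)

theorem exists_peirce_decomposition (hR : PairwiseNoncommuting R) (he0 : e ≠ 0)
    (he : e * e = e) (x : R) :
    ∃ b c a : R, x = b + c + a ∧ (e * b = b ∧ b * e = 0) ∧ (e * c = 0 ∧ c * e = c) ∧
      (a = 0 ∨ a = e) := by
  have hd := hR.eq_zero_of_mul_eq_zero_of_mul_eq_zero he0 he (d := x - e * x - x * e + e * x * e)
    (by simp only [mul_add, mul_sub, ← mul_assoc, he]; abel)
    (by simp only [add_mul, sub_mul, mul_assoc, he]; abel)
  refine ⟨e * x - e * x * e, x * e - e * x * e, e * x * e, ?_, ⟨?_, ?_⟩, ⟨?_, ?_⟩,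
    hR.eq_zero_or_eq_of_commute he0 ?_⟩
  · rw [← sub_eq_zero, ← hd]
    abel
  all_goals simp only [mul_sub, sub_mul, ← mul_assoc, he, sub_self]
  all_goals simp only [mul_assoc, he, sub_self]

theorem eq_zero_or_eq_zero_of_corners (hR : PairwiseNoncommuting R) (he0 : e ≠ 0)
    (he : e * e = e) {b c : R} (heb : e * b = b) (hbe : b * e = 0) (hec : e * c = 0)
    (hce : c * e = c) : b = 0 ∨ c = 0 := by
  by_contra! hbc
  obtain ⟨hb0, hc0⟩ := hbc
  have hbb : b * b = 0 := by
    calc b * b = b * e * b := by rw [mul_assoc, heb]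
      _ = 0 := by rw [hbe, zero_mul]
  have hcc : c * c = 0 := by
    calc c * c = c * e * c := by rw [hce]
      _ = 0 := by rw [mul_assoc, hec, mul_zero]
  have hcb : c * b = 0 := hR.eq_zero_of_mul_eq_zero_of_mul_eq_zero he0 he
    (by rw [← mul_assoc, hec, zero_mul]) (by rw [mul_assoc, hbe, mul_zero])
  have hbc : b * c = e := by
    rcases hR.eq_zero_or_eq_of_commute he0 (a := b * c)
      (by rw [mul_assoc, hce, ← mul_assoc, heb]) with h | h
    · rcases hR b c (h.trans hcb.symm) with h' | h' | rfl
      exacts [absurd h' hb0, absurd h' hc0, absurd (heb.symm.trans hec) hb0]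
    · exact h
  -- `b + c` squares to `e`, so it commutes with `e`; but `(b + c) e = c` and `e (b + c) = b`.
  have hsq : (b + c) * (b + c) = e := by
    rw [add_mul, mul_add, mul_add, hbb, hbc, hcb, hcc, zero_add, add_zero, add_zero]
  have hcomm : (b + c) * e = e * (b + c) := by
    rw [← hsq, mul_assoc]
  rw [add_mul, mul_add, hbe, hce, heb, hec, zero_add, add_zero] at hcomm
  exact hb0 (heb.symm.trans (hcomm ▸ hec))

theorem nonempty_ringEquiv_Fring (hR : PairwiseNoncommuting R) (he0 : e ≠ 0) (he : e * e = e)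
    {u : R} (hu0 : u ≠ 0) (heu : e * u = u) (hue : u * e = 0) : Nonempty (R ≃+* Fring) := by
  refine nonempty_ringEquiv_Fring_of_basis hR.add_self he0 hu0 he heu hue fun x => ?_
  obtain ⟨b, c, a, rfl, ⟨heb, hbe⟩, ⟨hec, hce⟩, ha⟩ := hR.exists_peirce_decomposition he0 he x
  obtain rfl : c = 0 := (hR.eq_zero_or_eq_zero_of_corners he0 he heu hue hec hce).resolve_left hu0
  have hb : b = 0 ∨ b = u := by
    have hbu : b * u = 0 := by rw [← heu, ← mul_assoc, hbe, zero_mul]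
    have hub : u * b = 0 := by rw [← heb, ← mul_assoc, hue, zero_mul]
    rcases hR b u (hbu.trans hub.symm) with h | h | h
    exacts [Or.inl h, absurd h hu0, Or.inr h]
  rcases hb with rfl | rfl <;> rcases ha with rfl | rfl <;> simp [add_comm]

theorem nonempty_ringEquiv (hR : PairwiseNoncommuting R) (hnc : ∃ x y : R, x * y ≠ y * x) :
    Nonempty (R ≃+* Ering) ∨ Nonempty (R ≃+* Fring) := by
  obtain ⟨e, he0, he⟩ := hR.exists_idempotent hnc
  by_cases hb : ∃ b : R, b ≠ 0 ∧ e * b = b ∧ b * e = 0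
  · obtain ⟨b, hb0, heb, hbe⟩ := hb
    exact Or.inr (hR.nonempty_ringEquiv_Fring he0 he hb0 heb hbe)
  by_cases hc : ∃ c : R, c ≠ 0 ∧ e * c = 0 ∧ c * e = c
  · obtain ⟨c, hc0, hec, hce⟩ := hc
    refine Or.inl (nonempty_ringEquiv_Ering_of_op ?_)
    exact hR.op.nonempty_ringEquiv_Fring (e := MulOpposite.op e) (u := MulOpposite.op c)
      (by simpa using he0) (congrArg MulOpposite.op he) (by simpa using hc0)
      (congrArg MulOpposite.op hce) (congrArg MulOpposite.op hec)
  push Not at hb hc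
  have hmem : ∀ x : R, x = 0 ∨ x = e := fun x => by
    obtain ⟨b, c, a, rfl, ⟨heb, hbe⟩, ⟨hec, hce⟩, ha⟩ := hR.exists_peirce_decomposition he0 he x
    obtain rfl : b = 0 := by_contra fun hb0 => hb b hb0 heb hbe
    obtain rfl : c = 0 := by_contra fun hc0 => hc c hc0 hec hce
    simpa using ha
  obtain ⟨x, y, hxy⟩ := hnc
  rcases hmem x with rfl | rfl <;> rcases hmem y with rfl | rfl <;> simp at hxy

end PairwiseNoncommuting

theorem notMem_center_of_mul_ne {M : Type*} [Semigroup M] {x y : M} (h : x * y ≠ y * x) :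
    x ∉ Set.center M :=
  fun hx => h (Semigroup.mem_center_iff.1 hx y).symm

section CommutingGraph

variable {R : Type*} [NonUnitalRing R]

theorem commutingGraph_ne_top (hnc : ∃ x y : R, x * y ≠ y * x) : commutingGraph R ≠ ⊤ := by
  obtain ⟨x, y, hxy⟩ := hnc
  intro htop
  have hadj : (⊤ : SimpleGraph {x : R // x ∉ Set.center R}).Adj
      ⟨x, notMem_center_of_mul_ne hxy⟩ ⟨y, notMem_center_of_mul_ne hxy.symm⟩ :=
    fun h => hxy (by rw [Subtype.mk.inj h])
  rw [← htop] at hadj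
  exact hxy hadj.2

theorem commutingGraph_eq_bot_iff (hz : Set.center R = {0}) :
    commutingGraph R = ⊥ ↔ PairwiseNoncommuting R := by
  rw [SimpleGraph.eq_bot_iff_forall_not_adj]
  constructor
  · intro h x y hxy
    by_contra! hne
    obtain ⟨hx, hy, hxy'⟩ := hne
    exact h ⟨x, by simpa [hz]⟩ ⟨y, by simpa [hz]⟩ ⟨fun h => hxy' (congrArg Subtype.val h), hxy⟩
  · rintro hR ⟨x, hx⟩ ⟨y, hy⟩ ⟨hne, hxy⟩
    rcases hR x y hxy with rfl | rfl | rfl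
    · simp [hz] at hx
    · simp [hz] at hy
    · exact hne rfl

theorem card_notMem_center_add_one [Fintype R] (hz : Set.center R = {0}) :
    Fintype.card {x : R // x ∉ Set.center R} + 1 = Fintype.card R := by
  simp only [hz, Set.mem_singleton_iff]
  rw [Fintype.card_subtype_compl, Fintype.card_subtype_eq]
  have := Fintype.card_pos_iff.2 ⟨(0 : R)⟩
  omega

end CommutingGraph

/-- Theorem A(i): `γ(Γ(R)) + γ(Γ̄(R)) = n` iff `R ≅ E` or `R ≅ F`. -/
theorem stmt_0 (R : Type*) [NonUnitalRing R] [Fintype R] (n : ℕ)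
    (hcard : Fintype.card R = n)
    (hnc : ∃ x y : R, x * y ≠ y * x)
    (hz : Set.center R = {0}) :
    (commutingGraph R).dominationNumber + ((commutingGraph R)ᶜ).dominationNumber = n ↔
      (Nonempty (R ≃+* Ering) ∨ Nonempty (R ≃+* Fring)) := by
  subst hcard
  have : Nonempty {x : R // x ∉ Set.center R} :=
    let ⟨x, _, hxy⟩ := hnc; ⟨⟨x, notMem_center_of_mul_ne hxy⟩⟩
  rw [← card_notMem_center_add_one hz, SimpleGraph.dominationNumber_add_compl_eq_card_add_one_iff,
    or_iff_left (commutingGraph_ne_top hnc), commutingGraph_eq_bot_iff hz]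
  refine ⟨fun hR => hR.nonempty_ringEquiv hnc, ?_⟩
  rintro (h | h) <;> obtain ⟨φ⟩ := h
  exacts [PairwiseNoncommuting.ering.of_ringEquiv φ, PairwiseNoncommuting.fring.of_ringEquiv φ]

end
end

section
/- Let p be a prime and R a non-commutative ring of order p³ with Z(R) = {0}. Then either γ(Γ(R)) = p² + p + 1, or there exist non-negative integers ℓ₁ and ℓ₂ with ℓ₁ + (p + 1)ℓ₂ = p² + p + 1 such that γ(Γ(R)) = ℓ₁ + ℓ₂. -/
open scoped Classical

noncomputable section

/-!
In a ring `R` of order `p³` the centralizer `C(x)` of a non-central `x` is a proper additive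
subgroup containing `x ≠ 0`, so `|C(x)| ∈ {p, p²}`. It is moreover commutative: `x` is a
non-zero central element of `C(x)`, and in a ring `S` of order dividing `p²` with non-zero
center, an `a ∉ Z(S)` would give a chain `0 < Z(S) < C_S(a)` of additive subgroups, which by
Lagrange forces `C_S(a) = S`, i.e. `a ∈ Z(S)`. Hence commuting is an equivalence relation on the non-central
elements and, when `Z(R) = 0`, `Γ(R)` is a disjoint union of the cliques `C(x) \ {0}`, so
`γ(Γ(R))` is their number `ℓ₁ + ℓ₂`, with `ℓ₁` cliques of size `p - 1` and `ℓ₂` of size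
`p² - 1`. Counting the `p³ - 1` vertices gives `ℓ₁ (p - 1) + ℓ₂ (p² - 1) = p³ - 1`.
-/

theorem SimpleGraph.dominationNumber_eq_card_quotient {V : Type*} [Fintype V]
    (G : SimpleGraph V) (s : Setoid V) (h : ∀ a b, G.Adj a b ↔ a ≠ b ∧ s a b) :
    G.dominationNumber = Nat.card (Quotient s) := by
  rw [Nat.card_eq_fintype_card]
  set reps : Finset V := (Finset.univ : Finset (Quotient s)).image Quotient.out
  have hreps : G.IsDominatingSet reps := by
    intro v hv
    refine ⟨⟦v⟧.out, Finset.mem_image_of_mem _ (Finset.mem_univ _), (h _ _).2 ⟨?_, ?_⟩⟩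
    · intro hv'
      exact hv (hv' ▸ Finset.mem_image_of_mem _ (Finset.mem_univ _))
    · exact Quotient.mk_out v
  have hcard : reps.card = Fintype.card (Quotient s) :=
    Finset.card_image_of_injective _ Quotient.out_injective
  refine le_antisymm (Nat.sInf_le ⟨_, hreps, hcard⟩) (le_csInf ⟨_, _, hreps, hcard⟩ ?_)
  rintro _ ⟨D, hD, rfl⟩
  refine Finset.card_le_card_of_surjOn (fun v => (⟦v⟧ : Quotient s)) fun t _ => ?_
  by_cases ht : t.out ∈ D
  · exact ⟨t.out, ht, Quotient.out_eq t⟩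
  · obtain ⟨u, hu, hadj⟩ := hD t.out ht
    exact ⟨u, hu, (Quotient.sound ((h _ _).1 hadj).2).trans (Quotient.out_eq t)⟩

theorem Fintype.exists_sum_eq_of_forall_eq_or_eq {ι : Type*} [Fintype ι] {f : ι → ℕ}
    {a b : ℕ} (h : ∀ i, f i = a ∨ f i = b) :
    ∃ l₁ l₂, Nat.card ι = l₁ + l₂ ∧ ∑ i, f i = l₁ * a + l₂ * b := by
  refine ⟨(Finset.univ.filter fun i => f i = a).card,
    (Finset.univ.filter fun i => f i ≠ a).card, ?_, ?_⟩
  · rw [Nat.card_eq_fintype_card, ← Finset.card_univ, Finset.card_filter_add_card_filter_not]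
  · rw [← Finset.sum_filter_add_sum_filter_not _ (fun i => f i = a),
      Finset.sum_congr rfl fun i hi => (Finset.mem_filter.1 hi).2,
      Finset.sum_congr rfl fun i hi => ((h i).resolve_left (Finset.mem_filter.1 hi).2)]
    simp only [Finset.sum_const, smul_eq_mul]

namespace AddSubgroup

variable {G : Type*} [AddGroup G] [Finite G] {p : ℕ}

theorem card_eq_of_card_dvd_prime_sq (hp : p.Prime) (hG : Nat.card G ∣ p ^ 2)
    {H : AddSubgroup G} (hbot : H ≠ ⊥) (htop : H ≠ ⊤) : Nat.card H = p := by
  obtain ⟨k, hk, hH⟩ := (Nat.dvd_prime_pow hp).1 ((card_addSubgroup_dvd_card H).trans hG)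
  interval_cases k
  · exact absurd (H.eq_bot_of_card_eq (by simpa using hH)) hbot
  · simpa using hH
  · exact absurd (H.eq_top_of_le_card (hH ▸ Nat.le_of_dvd (pow_pos hp.pos 2) hG)) htop

theorem eq_top_of_ne_bot_of_lt (hp : p.Prime) (hG : Nat.card G ∣ p ^ 2)
    {H K : AddSubgroup G} (hH : H ≠ ⊥) (hHK : H < K) : K = ⊤ := by
  by_contra hK
  have hcardH := card_eq_of_card_dvd_prime_sq hp hG hH (hHK.trans_le le_top).ne
  have hcardK := card_eq_of_card_dvd_prime_sq hp hG (ne_bot_of_gt hHK) hK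
  exact hHK.ne (eq_of_le_of_card_ge hHK.le (hcardK.trans hcardH.symm).le)

end AddSubgroup

theorem NonUnitalSubring.mem_centralizer_singleton_iff {R : Type*} [NonUnitalRing R] {x y : R} :
    y ∈ centralizer {x} ↔ Commute x y := by
  simp [mem_centralizer_iff, Commute, SemiconjBy]

theorem mul_comm_of_card_dvd_prime_sq {S : Type*} [NonUnitalRing S] [Finite S] {p : ℕ}
    (hp : p.Prime) (hS : Nat.card S ∣ p ^ 2) {z : S} (hz : z ∈ Set.center S) (hz0 : z ≠ 0)
    (a b : S) : a * b = b * a := by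
  by_contra hab
  set Z := (NonUnitalSubring.center S).toAddSubgroup
  set C := (NonUnitalSubring.centralizer {a}).toAddSubgroup
  have hZ : Z ≠ ⊥ :=
    Z.ne_bot_iff_exists_ne_zero.2 ⟨⟨z, hz⟩, fun h => hz0 (congrArg Subtype.val h)⟩
  have hZC : Z < C := by
    refine SetLike.lt_iff_le_and_exists.2 ⟨fun c hc => ?_, a, ?_, fun ha => ?_⟩
    · exact NonUnitalSubring.mem_centralizer_singleton_iff.2 (Semigroup.mem_center_iff.1 hc a)
    · exact NonUnitalSubring.mem_centralizer_singleton_iff.2 (Commute.refl a)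
    · exact hab (Semigroup.mem_center_iff.1 ha b).symm
  have hb : b ∈ C := AddSubgroup.eq_top_of_ne_bot_of_lt hp hS hZ hZC ▸ AddSubgroup.mem_top b
  exact hab (NonUnitalSubring.mem_centralizer_singleton_iff.1 hb)

section CardPrimeCube

variable {R : Type*} [NonUnitalRing R] [Finite R] {p : ℕ}

theorem card_centralizer_singleton_eq (hp : p.Prime) (hR : Nat.card R = p ^ 3) {x : R}
    (hx : x ∉ Set.center R) :
    Nat.card (NonUnitalSubring.centralizer {x}) = p ∨
      Nat.card (NonUnitalSubring.centralizer {x}) = p ^ 2 := by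
  set C := (NonUnitalSubring.centralizer {x}).toAddSubgroup
  have hxC : x ∈ C := NonUnitalSubring.mem_centralizer_singleton_iff.2 (Commute.refl x)
  obtain ⟨k, hk, hC⟩ := (Nat.dvd_prime_pow hp).1 (hR ▸ C.card_addSubgroup_dvd_card)
  interval_cases k
  · have hx0 : x = 0 := by
      rw [← AddSubgroup.mem_bot, ← C.eq_bot_of_card_eq (by simpa using hC)]
      exact hxC
    exact absurd (hx0 ▸ Set.zero_mem_center) hx
  · exact .inl (hC.trans (pow_one p))
  · exact .inr hC
  · refine absurd (Semigroup.mem_center_iff.2 fun g => ?_) hx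
    have hg : g ∈ C := C.eq_top_of_le_card (hR ▸ hC.ge) ▸ AddSubgroup.mem_top g
    exact (NonUnitalSubring.mem_centralizer_singleton_iff.1 hg).symm

theorem Commute.trans_of_notMem_center (hp : p.Prime) (hR : Nat.card R = p ^ 3) {a x b : R}
    (hx : x ∉ Set.center R) (hax : Commute a x) (hxb : Commute x b) : Commute a b := by
  set C := NonUnitalSubring.centralizer {x}
  have hC : Nat.card C ∣ p ^ 2 := (card_centralizer_singleton_eq hp hR hx).elim
    (fun h => h ▸ dvd_pow_self p two_ne_zero) (fun h => h ▸ dvd_rfl)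
  have hxC : x ∈ C := NonUnitalSubring.mem_centralizer_singleton_iff.2 (Commute.refl x)
  have hxZ : (⟨x, hxC⟩ : C) ∈ Set.center C := Semigroup.mem_center_iff.2 fun g =>
    Subtype.ext (NonUnitalSubring.mem_centralizer_singleton_iff.1 g.2).symm
  have hx0 : (⟨x, hxC⟩ : C) ≠ 0 := fun h => hx <| by
    rw [show x = 0 from congrArg Subtype.val h]
    exact Set.zero_mem_center
  exact congrArg Subtype.val <| mul_comm_of_card_dvd_prime_sq hp hC hxZ hx0
    ⟨a, NonUnitalSubring.mem_centralizer_singleton_iff.2 hax.symm⟩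
    ⟨b, NonUnitalSubring.mem_centralizer_singleton_iff.2 hxb⟩

theorem equivalence_commute_of_card_eq_prime_pow_three (hp : p.Prime)
    (hR : Nat.card R = p ^ 3) :
    Equivalence fun u v : {x : R // x ∉ Set.center R} => Commute (u : R) v :=
  ⟨fun _ => Commute.refl _, Commute.symm,
    fun {_ y _} => Commute.trans_of_notMem_center hp hR y.2⟩

end CardPrimeCube

theorem Nat.add_succ_mul_eq_of_mul_sub_one_eq {p l₁ l₂ : ℕ} (hp : 2 ≤ p)
    (h : l₁ * (p - 1) + l₂ * (p ^ 2 - 1) = p ^ 3 - 1) :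
    l₁ + (p + 1) * l₂ = p ^ 2 + p + 1 := by
  have hp1 : 1 ≤ p := by omega
  zify [hp1, Nat.one_le_pow 2 p hp1, Nat.one_le_pow 3 p hp1] at h
  have hp1' : (p : ℤ) - 1 ≠ 0 := by omega
  have hmul : ((l₁ : ℤ) + (p + 1) * l₂) * (p - 1) = (p ^ 2 + p + 1) * (p - 1) := by
    linear_combination h
  exact_mod_cast mul_right_cancel₀ hp1' hmul

section TrivialCenter

variable {R : Type*} [NonUnitalRing R]

theorem card_notMem_center [Finite R] (hz : Set.center R = {0}) :
    Nat.card {x : R // x ∉ Set.center R} = Nat.card R - 1 := by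
  change Nat.card ↥(Set.center R)ᶜ = _
  rw [Nat.card_coe_set_eq, Set.ncard_compl, hz, Set.ncard_singleton]

theorem card_commute_eq_card_centralizer_sub_one (hz : Set.center R = {0}) (w : R) :
    Nat.card {u : {x : R // x ∉ Set.center R} // Commute (u : R) w} =
      Nat.card (NonUnitalSubring.centralizer {w}) - 1 := by
  set C := NonUnitalSubring.centralizer {w}
  calc Nat.card {u : {x : R // x ∉ Set.center R} // Commute (u : R) w}
      = Nat.card ↥((C : Set R) \ {0}) := by
        refine Nat.card_congr ((Equiv.subtypeSubtypeEquivSubtypeInter _ (Commute · w)).trans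
          (Equiv.subtypeEquivRight fun y => ?_))
        rw [hz, Set.mem_sdiff, SetLike.mem_coe, NonUnitalSubring.mem_centralizer_singleton_iff,
          Commute.symm_iff, and_comm]
    _ = Nat.card C - 1 := by
        rw [Nat.card_coe_set_eq, Set.ncard_sdiff_singleton_of_mem C.zero_mem,
          ← Nat.card_coe_set_eq]
        rfl

end TrivialCenter

theorem stmt_3_general (p : ℕ) (hp : p.Prime)
    (R : Type*) [NonUnitalRing R] [Fintype R]
    (hcard : Fintype.card R = p ^ 3)
    (hz : Set.center R = {0}) :
    (commutingGraph R).dominationNumber = p ^ 2 + p + 1 ∨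
      ∃ ℓ₁ ℓ₂ : ℕ, ℓ₁ + (p + 1) * ℓ₂ = p ^ 2 + p + 1 ∧
        (commutingGraph R).dominationNumber = ℓ₁ + ℓ₂ := by
  right
  have hR : Nat.card R = p ^ 3 := by rw [Nat.card_eq_fintype_card, hcard]
  let s : Setoid {x : R // x ∉ Set.center R} :=
    ⟨_, equivalence_commute_of_card_eq_prime_pow_three hp hR⟩
  have hclass : ∀ t : Quotient s,
      Nat.card {u // ⟦u⟧ = t} = p - 1 ∨ Nat.card {u // ⟦u⟧ = t} = p ^ 2 - 1 := by
    intro t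
    have hfiber : Nat.card {u // ⟦u⟧ = t} = Nat.card {u : {x : R // x ∉ Set.center R} //
        Commute (u : R) t.out} :=
      Nat.card_congr (Equiv.subtypeEquivRight fun _ => Quotient.mk_eq_iff_out)
    rw [hfiber, card_commute_eq_card_centralizer_sub_one hz]
    rcases card_centralizer_singleton_eq hp hR t.out.2 with h | h <;> rw [h] <;> simp
  have hsum : ∑ t : Quotient s, Nat.card {u // ⟦u⟧ = t} = p ^ 3 - 1 := by
    rw [← Nat.card_sigma, Nat.card_congr (Equiv.sigmaFiberEquiv _), card_notMem_center hz, hR]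
  obtain ⟨l₁, l₂, hl, hsum'⟩ := Fintype.exists_sum_eq_of_forall_eq_or_eq hclass
  refine ⟨l₁, l₂, Nat.add_succ_mul_eq_of_mul_sub_one_eq hp.two_le (hsum' ▸ hsum), ?_⟩
  rw [(commutingGraph R).dominationNumber_eq_card_quotient s fun _ _ => Iff.rfl, hl]

/-- Theorem B: for a non-commutative ring of order `p³` with trivial center,
either `γ(Γ(R)) = p² + p + 1`, or `γ(Γ(R)) = ℓ₁ + ℓ₂` where
`ℓ₁ + (p+1)ℓ₂ = p² + p + 1`. -/
theorem stmt_3 (p : ℕ) (hp : p.Prime)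
    (R : Type*) [NonUnitalRing R] [Fintype R]
    (hcard : Fintype.card R = p ^ 3)
    (hnc : ∃ x y : R, x * y ≠ y * x)
    (hz : Set.center R = {0}) :
    (commutingGraph R).dominationNumber = p ^ 2 + p + 1 ∨
      ∃ ℓ₁ ℓ₂ : ℕ, ℓ₁ + (p + 1) * ℓ₂ = p ^ 2 + p + 1 ∧
        (commutingGraph R).dominationNumber = ℓ₁ + ℓ₂ :=
  stmt_3_general p hp R hcard hz

end
end

section
/- Let R be a finite non-commutative ring of even order n with Z(R) = {0}. Then γ_s(Γ(R)) = n - 1 if and only if R is isomorphic to E or to F. -/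
open scoped Classical

noncomputable section

/-!
Say that `R` has trivial centralizers if nonzero commuting elements are equal; when `Z(R) = {0}`
this says exactly that `Γ(R)` has no edges, and then `γₛ(Γ(R)) = |R \ {0}| = n - 1`.

Otherwise there is a vertex `v₀` every closed neighbour of which has a closed neighbourhood of
size at least `3`, so `v₀` can carry weight `-1` and `γₛ ≤ n - 3`: take `v₀` of additive order at
least `4` if there is one; if not, an element of order `2` (the order is even) forces
characteristic `2`, and `v₀` can be any endpoint of an edge `x y`, the third neighbour being a sum.

A non-commutative ring with trivial centralizers has characteristic `2` (`w` commutes with `w + w`)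
and a nonzero idempotent `e` (otherwise all squares vanish and `R` is commutative). In the Peirce
decomposition `w = ewe + (ew - ewe) + (we - ewe)` the corner `ewe` lies in `{0, e}`, each
off-diagonal corner has at most one nonzero element, and they cannot both be nonzero. So
`R = {0, e, p, e + p}` with `ep = p, pe = 0`, which is `F`, or the opposite situation, which is
`Fᵐᵒᵖ ≅ E`.
-/

open Finset

theorem Finset.sum_ite_eq_neg_one {α : Type*} [DecidableEq α] (s : Finset α) (a : α) :
    ∑ u ∈ s, (if u = a then -1 else 1 : ℤ) = #s - if a ∈ s then 2 else 0 := by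
  rw [← sum_ite_eq' s a fun _ => (2 : ℤ), card_eq_sum_ones, Nat.cast_sum, ← sum_sub_distrib]
  refine sum_congr rfl fun u _ => ?_
  split_ifs <;> norm_num

namespace SimpleGraph

variable {V : Type*} [Fintype V] (G : SimpleGraph V)

theorem signedDominationNumber_le_sum (f : V → ℤ) (hf : ∀ v, f v = 1 ∨ f v = -1)
    (hdom : ∀ v, 1 ≤ ∑ u ∈ univ.filter (fun u => G.Adj v u ∨ u = v), f u) :
    G.signedDominationNumber ≤ ∑ v, f v := by
  refine csInf_le ⟨-(Fintype.card V : ℤ), ?_⟩ ⟨f, hf, hdom, rfl⟩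
  rintro _ ⟨g, hg, -, rfl⟩
  have hge : ∀ v ∈ univ, (-1 : ℤ) ≤ g v := fun v _ => by rcases hg v with h | h <;> simp [h]
  simpa using sum_le_sum hge

theorem signedDominationNumber_eq_card_of_forall_not_adj (h : ∀ u v, ¬ G.Adj u v) :
    G.signedDominationNumber = Fintype.card V := by
  have hnbhd : ∀ v, univ.filter (fun u => G.Adj v u ∨ u = v) = {v} := fun v => by
    ext u; simp [h v u]
  have hone : ∀ v, 1 ≤ ∑ u ∈ univ.filter (fun u => G.Adj v u ∨ u = v), (1 : ℤ) := fun v => by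
    simp [hnbhd]
  refine le_antisymm (by simpa using G.signedDominationNumber_le_sum _ (fun _ => .inl rfl) hone)
    (le_csInf ⟨_, fun _ => 1, fun _ => .inl rfl, hone, rfl⟩ ?_)
  rintro _ ⟨f, hf, hdom, rfl⟩
  have hf1 : ∀ v, f v = 1 := fun v => by
    have := hdom v
    rw [hnbhd, sum_singleton] at this
    exact (hf v).resolve_right (by omega)
  simp [hf1]

theorem signedDominationNumber_le_card_sub_two (v₀ : V)
    (h : ∀ v, G.Adj v v₀ ∨ v₀ = v → 2 < #(univ.filter fun u => G.Adj v u ∨ u = v)) :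
    G.signedDominationNumber ≤ Fintype.card V - 2 := by
  have hsum := G.signedDominationNumber_le_sum (fun u => if u = v₀ then -1 else 1)
    (fun u => by by_cases hu : u = v₀ <;> simp [hu]) fun v => by
      rw [sum_ite_eq_neg_one]
      split_ifs with hv₀
      · have := h v (by simpa using hv₀)
        omega
      · have : 0 < #(univ.filter fun u => G.Adj v u ∨ u = v) := card_pos.2 ⟨v, by simp⟩
        omega
  simpa [sum_ite_eq_neg_one] using hsum

end SimpleGraph

theorem eq_of_add_eq_zero_of_add_self_eq_zero {G : Type*} [AddGroup G] {a b : G}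
    (hb : b + b = 0) (hab : a + b = 0) : a = b :=
  (eq_neg_of_add_eq_zero_left hab).trans (neg_eq_of_add_eq_zero_left hb)

theorem add_self_eq_zero_of_even_card {G : Type*} [AddCommGroup G] [Fintype G]
    (hn : Even (Fintype.card G)) (h : ∀ g : G, g ≠ 0 → 2 • g ≠ 0 → 3 • g = 0) (w : G) :
    w + w = 0 := by
  by_contra hw
  rw [← two_nsmul] at hw
  obtain ⟨t, ht⟩ := exists_prime_addOrderOf_dvd_card 2 hn.two_dvd
  have ht2 : t + t = 0 := by rw [← two_nsmul, ← ht, addOrderOf_nsmul_eq_zero]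
  have ht0 : t ≠ 0 := by rintro rfl; simp at ht
  have hw3 : 3 • w = 0 := h w (by rintro rfl; simp at hw) hw
  -- `w + t` would have order `6`
  have h2w : 2 • w = 2 • (w + t) - (t + t) := by abel
  have hwt : 3 • (w + t) = 0 :=
    h _ (fun h0 => hw (by rw [h2w, h0, ht2, smul_zero, sub_zero]))
      (fun h0 => hw (by rw [h2w, h0, ht2, sub_zero]))
  exact ht0 <| calc
    t = 3 • (w + t) - 3 • w - (t + t) := by abel
    _ = 0 := by rw [hwt, hw3, ht2, sub_zero, sub_zero]

theorem ZMod.forall_two {p : ZMod 2 → Prop} : (∀ a, p a) ↔ p 0 ∧ p 1 :=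
  ⟨fun h => ⟨h 0, h 1⟩, fun h a => by fin_cases a; exacts [h.1, h.2]⟩

theorem ZMod.val_add_nsmul_of_add_self_eq_zero {M : Type*} [AddMonoid M] {x : M}
    (hx : x + x = 0) : ∀ a b : ZMod 2, (a + b).val • x = a.val • x + b.val • x := by
  simp [ZMod.forall_two, hx, ZMod.val_one, show (1 + 1 : ZMod 2) = 0 from rfl]

theorem ZMod.val_nsmul_mul_val_nsmul {R : Type*} [NonUnitalNonAssocSemiring R] (x y : R) :
    ∀ a b : ZMod 2, a.val • x * b.val • y = (a * b).val • (x * y) := by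
  simp [ZMod.forall_two, ZMod.val_one]

theorem ZMod.exists_val_nsmul_eq {M : Type*} [AddMonoid M] {x y : M} (hy : y = 0 ∨ y = x) :
    ∃ a : ZMod 2, a.val • x = y := by
  rcases hy with rfl | rfl
  exacts [⟨0, by simp⟩, ⟨1, by simp [ZMod.val_one]⟩]

section Fring

variable {R : Type*} [NonUnitalRing R] {e p : R}

def fringHom (he2 : e + e = 0) (hp2 : p + p = 0) (he : IsIdempotentElem e) (hep : e * p = p)
    (hpe : p * e = 0) : Fring →ₙ+* R where
  toFun u := u.1.val • e + u.2.val • p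
  map_mul' u v := by
    have hpp : p * p = 0 := calc
      p * p = p * e * p := by rw [mul_assoc, hep]
      _ = 0 := by rw [hpe, zero_mul]
    change (u.1 * v.1).val • e + (u.1 * v.2).val • p = _
    simp only [add_mul, mul_add, ZMod.val_nsmul_mul_val_nsmul, he.eq, hep, hpe, hpp, smul_zero,
      add_zero]
  map_zero' := by change (0 : ZMod 2).val • e + (0 : ZMod 2).val • p = 0; simp
  map_add' u v := by
    change (u.1 + v.1).val • e + (u.2 + v.2).val • p = _
    rw [ZMod.val_add_nsmul_of_add_self_eq_zero he2, ZMod.val_add_nsmul_of_add_self_eq_zero hp2]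
    abel

theorem fringHom_apply (he2 : e + e = 0) (hp2 : p + p = 0) (he : IsIdempotentElem e)
    (hep : e * p = p) (hpe : p * e = 0) (a b : ZMod 2) :
    fringHom he2 hp2 he hep hpe ((a, b) : Fring) = a.val • e + b.val • p :=
  rfl

end Fring

def HasTrivialCentralizers (R : Type*) [NonUnitalRing R] : Prop :=
  ∀ x y : R, x ≠ 0 → y ≠ 0 → Commute x y → x = y

namespace HasTrivialCentralizers

variable {R : Type*} [NonUnitalRing R]

theorem add_self_eq_zero (h : HasTrivialCentralizers R) (w : R) : w + w = 0 := by
  by_contra h2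
  have hw : w ≠ 0 := by rintro rfl; simp at h2
  have := h _ _ h2 hw (by simp [Commute, SemiconjBy, add_mul, mul_add])
  exact hw (by simpa using this)

theorem eq_zero_or_eq_of_commute (h : HasTrivialCentralizers R) {e a : R} (he0 : e ≠ 0)
    (hc : Commute a e) : a = 0 ∨ a = e :=
  or_iff_not_imp_left.2 fun ha => h a e ha he0 hc

theorem eq_zero_of_mul_eq_zero_of_mul_eq_zero (h : HasTrivialCentralizers R) {e q : R}
    (he : IsIdempotentElem e) (he0 : e ≠ 0) (hl : e * q = 0) (hr : q * e = 0) : q = 0 := by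
  refine (h.eq_zero_or_eq_of_commute he0 (hr.trans hl.symm)).resolve_right ?_
  rintro rfl
  exact he0 (he.eq.symm.trans hl)

theorem exists_isIdempotentElem (h : HasTrivialCentralizers R)
    (hnc : ∃ x y : R, x * y ≠ y * x) : ∃ e : R, e ≠ 0 ∧ IsIdempotentElem e := by
  by_contra! hno
  have hsq : ∀ w : R, w * w = 0 := fun w => by
    by_contra hw
    exact hno w (by rintro rfl; simp at hw)
      (h _ w hw (by rintro rfl; simp at hw) (mul_assoc w w w))
  obtain ⟨x, y, hxy⟩ := hnc
  have hsum := hsq (x + y)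
  rw [add_mul, mul_add, mul_add, hsq, hsq, zero_add, add_zero] at hsum
  exact hxy (eq_of_add_eq_zero_of_add_self_eq_zero (h.add_self_eq_zero _) hsum)

theorem peirce_decomposition (h : HasTrivialCentralizers R) {e : R} (he : IsIdempotentElem e)
    (he0 : e ≠ 0) (w : R) : w = e * w * e + (e * w - e * w * e) + (w * e - e * w * e) := by
  have hcorner : w - e * w - w * e + e * w * e = 0 :=
    h.eq_zero_of_mul_eq_zero_of_mul_eq_zero he he0
      (by simp only [mul_add, mul_sub, ← mul_assoc, he.eq]; abel)
      (by simp only [add_mul, sub_mul, he.mul_mul_self]; abel)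
  rw [← sub_eq_zero, ← hcorner]
  abel

theorem mul_mul_eq_zero_or_eq (h : HasTrivialCentralizers R) {e : R} (he : IsIdempotentElem e)
    (he0 : e ≠ 0) (w : R) : e * w * e = 0 ∨ e * w * e = e :=
  h.eq_zero_or_eq_of_commute he0 <| by
    simp only [Commute, SemiconjBy, he.mul_mul_self, ← mul_assoc, he.eq]

theorem eq_of_mul_eq_self_of_mul_eq_zero (h : HasTrivialCentralizers R) {e p p' : R}
    (hp0 : p ≠ 0) (hp'0 : p' ≠ 0) (hep : e * p = p) (hpe : p * e = 0) (hep' : e * p' = p')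
    (hp'e : p' * e = 0) : p = p' :=
  h p p' hp0 hp'0 <| calc
    p * p' = p * e * p' := by rw [mul_assoc, hep']
    _ = 0 := by rw [hpe, zero_mul]
    _ = p' * e * p := by rw [hp'e, zero_mul]
    _ = p' * p := by rw [mul_assoc, hep]

theorem eq_zero_of_mul_eq_zero_of_mul_eq_self (h : HasTrivialCentralizers R) {e p r : R}
    (he : IsIdempotentElem e) (he0 : e ≠ 0) (hp0 : p ≠ 0) (hep : e * p = p) (hpe : p * e = 0)
    (her : e * r = 0) (hre : r * e = r) : r = 0 := by
  have hrp : r * p = 0 := h.eq_zero_of_mul_eq_zero_of_mul_eq_zero he he0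
    (by rw [← mul_assoc, her, zero_mul]) (by rw [mul_assoc, hpe, mul_zero])
  rcases h.eq_zero_or_eq_of_commute he0 (a := p * r)
    (by rw [Commute, SemiconjBy, mul_assoc, hre, ← mul_assoc, hep]) with hpr | hpr
  · by_contra hr0
    obtain rfl := h p r hp0 hr0 (hpr.trans hrp.symm)
    exact hp0 (hep.symm.trans her)
  · rw [← hre, ← hpr, ← mul_assoc, hrp, zero_mul]

theorem nonempty_ringEquiv_Fring (h : HasTrivialCentralizers R) {e p : R}
    (he : IsIdempotentElem e) (he0 : e ≠ 0) (hp0 : p ≠ 0) (hep : e * p = p) (hpe : p * e = 0) :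
    Nonempty (R ≃+* Fring) := by
  let ψ := fringHom (h.add_self_eq_zero e) (h.add_self_eq_zero p) he hep hpe
  have hinj : Function.Injective ψ := by
    have hep0 : e + p ≠ 0 := fun hsum => by
      obtain rfl := eq_of_add_eq_zero_of_add_self_eq_zero (h.add_self_eq_zero p) hsum
      exact he0 (he.eq.symm.trans hpe)
    refine (injective_iff_map_eq_zero ψ).2 fun ⟨a, b⟩ => ?_
    revert a b
    simp [ψ, ZMod.forall_two, fringHom_apply, ZMod.val_one, he0, hp0, hep0]
    rfl
  have hsurj : Function.Surjective ψ := fun w => by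
    have hp' : e * w - e * w * e = 0 ∨ e * w - e * w * e = p := or_iff_not_imp_left.2 fun hp'0 =>
      h.eq_of_mul_eq_self_of_mul_eq_zero hp'0 hp0 (by simp only [mul_sub, ← mul_assoc, he.eq])
        (by simp only [sub_mul, he.mul_mul_self, sub_self]) hep hpe
    have hr : w * e - e * w * e = 0 := h.eq_zero_of_mul_eq_zero_of_mul_eq_self he he0 hp0 hep hpe
      (by simp only [mul_sub, ← mul_assoc, he.eq, sub_self])
      (by simp only [sub_mul, he.mul_mul_self])
    obtain ⟨a, ha⟩ := ZMod.exists_val_nsmul_eq (h.mul_mul_eq_zero_or_eq he he0 w)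
    obtain ⟨b, hb⟩ := ZMod.exists_val_nsmul_eq hp'
    have hw := h.peirce_decomposition he he0 w
    rw [hr, add_zero] at hw
    exact ⟨(a, b), by rw [fringHom_apply, ha, hb, ← hw]⟩
  exact ⟨(RingEquiv.ofBijective ψ ⟨hinj, hsurj⟩).symm⟩

theorem of_ringEquiv {S : Type*} [NonUnitalRing S] (h : HasTrivialCentralizers S)
    (φ : R ≃+* S) : HasTrivialCentralizers R := fun x y hx hy hxy =>
  φ.injective <| h _ _ (by simpa using hx) (by simpa using hy) (hxy.map φ)

theorem op (h : HasTrivialCentralizers R) : HasTrivialCentralizers Rᵐᵒᵖ :=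
  fun x y hx hy hxy =>
    MulOpposite.unop_injective <| h _ _ (by simpa using hx) (by simpa using hy) hxy.unop

end HasTrivialCentralizers

def fringOpEquivEring : Fringᵐᵒᵖ ≃+* Ering where
  toFun x := (x.unop : ZMod 2 × ZMod 2)
  invFun x := MulOpposite.op (x : ZMod 2 × ZMod 2)
  left_inv _ := rfl
  right_inv _ := rfl
  map_mul' _ _ := rfl
  map_add' _ _ := rfl

theorem hasTrivialCentralizers_Ering : HasTrivialCentralizers Ering := by
  unfold HasTrivialCentralizers Commute SemiconjBy
  decide

theorem hasTrivialCentralizers_Fring : HasTrivialCentralizers Fring := by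
  unfold HasTrivialCentralizers Commute SemiconjBy
  decide

section

variable {R : Type*} [NonUnitalRing R]

theorem HasTrivialCentralizers.nonempty_ringEquiv (h : HasTrivialCentralizers R)
    (hnc : ∃ x y : R, x * y ≠ y * x) : Nonempty (R ≃+* Ering) ∨ Nonempty (R ≃+* Fring) := by
  obtain ⟨e, he0, he⟩ := h.exists_isIdempotentElem hnc
  by_cases hl : ∃ w, e * w - e * w * e ≠ 0
  · obtain ⟨w, hw⟩ := hl
    exact .inr <| h.nonempty_ringEquiv_Fring he he0 hw
      (by simp only [mul_sub, ← mul_assoc, he.eq])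
      (by simp only [sub_mul, he.mul_mul_self, sub_self])
  by_cases hr : ∃ w, w * e - e * w * e ≠ 0
  · obtain ⟨w, hw⟩ := hr
    obtain ⟨φ⟩ := h.op.nonempty_ringEquiv_Fring (e := .op e) (p := .op (w * e - e * w * e))
      (congrArg MulOpposite.op he.eq) ((MulOpposite.op_ne_zero_iff e).2 he0)
      ((MulOpposite.op_ne_zero_iff _).2 hw)
      (by simp only [← MulOpposite.op_mul, sub_mul, he.mul_mul_self])
      (by simp only [← MulOpposite.op_mul, mul_sub, ← mul_assoc, he.eq, sub_self,
        MulOpposite.op_zero])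
    exact .inl ⟨(RingEquiv.opOp R).trans ((RingEquiv.op φ).trans fringOpEquivEring)⟩
  push Not at hl hr
  have hcorner : ∀ w, w = 0 ∨ w = e := fun w => by
    rw [h.peirce_decomposition he he0 w, hl, hr, add_zero, add_zero]
    exact h.mul_mul_eq_zero_or_eq he he0 w
  obtain ⟨x, y, hxy⟩ := hnc
  rcases hcorner x with rfl | rfl <;> rcases hcorner y with rfl | rfl <;> simp at hxy

theorem two_lt_card_commute_of_add_self_eq_zero [Fintype R] (hchar : ∀ w : R, w + w = 0)
    {u a b : R} (ha : a ≠ 0) (hb : b ≠ 0) (hab : a ≠ b) (hua : Commute u a)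
    (hub : Commute u b) : 2 < #{w : R | w ≠ 0 ∧ Commute u w} := by
  have hab0 : a + b ≠ 0 := fun h => hab (eq_of_add_eq_zero_of_add_self_eq_zero (hchar b) h)
  refine two_lt_card.2 ⟨a, by simp [ha, hua], b, by simp [hb, hub], a + b,
    by simp [hab0, hua.add_right hub], hab, by simpa using hb, by simpa using ha⟩

theorem exists_ne_zero_forall_two_lt_card_commute [Fintype R] (hn : Even (Fintype.card R))
    (h : ¬ HasTrivialCentralizers R) :
    ∃ v₀ : R, v₀ ≠ 0 ∧
      ∀ u : R, u ≠ 0 → Commute u v₀ → 2 < #{w : R | w ≠ 0 ∧ Commute u w} := by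
  by_cases hg : ∃ g : R, g ≠ 0 ∧ 2 • g ≠ 0 ∧ 3 • g ≠ 0
  · obtain ⟨g, hg1, hg2, hg3⟩ := hg
    have h3 : 3 • g = 2 • g + g := succ_nsmul g 2
    refine ⟨g, hg1, fun u _ hug => two_lt_card.2 ⟨g, by simp [hg1, hug], 2 • g,
      by simp [hg2, hug.smul_right], 3 • g, by simp [hg3, hug.smul_right], ?_, ?_, ?_⟩⟩
    · simpa [two_nsmul] using hg1
    · simpa [h3] using hg2
    · simpa [h3] using hg1
  push Not at hg
  have hchar := add_self_eq_zero_of_even_card hn hg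
  unfold HasTrivialCentralizers at h
  push Not at h
  obtain ⟨x, y, hx, hy, hxy, hne⟩ := h
  refine ⟨x, hx, fun u hu hux => ?_⟩
  by_cases hux' : u = x
  · subst hux'
    exact two_lt_card_commute_of_add_self_eq_zero hchar hu hy hne (Commute.refl u) hxy
  · exact two_lt_card_commute_of_add_self_eq_zero hchar hu hx hux' (Commute.refl u) hux

theorem coe_ne_zero_of_not_mem_center (x : {x : R // x ∉ Set.center R}) : (x : R) ≠ 0 :=
  fun h0 => x.2 (h0 ▸ Set.zero_mem_center)

theorem commutingGraph_adj_or_eq_iff {u v : {x : R // x ∉ Set.center R}} :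
    (commutingGraph R).Adj v u ∨ u = v ↔ Commute (v : R) u := by
  refine ⟨?_, fun h => ?_⟩
  · rintro (⟨-, h⟩ | rfl)
    exacts [h, Commute.refl _]
  · by_cases huv : u = v
    exacts [.inr huv, .inl ⟨Ne.symm huv, h⟩]

theorem HasTrivialCentralizers.not_adj_commutingGraph (h : HasTrivialCentralizers R)
    (u v : {x : R // x ∉ Set.center R}) : ¬ (commutingGraph R).Adj u v := fun ⟨huv, hc⟩ =>
  huv <| Subtype.ext <|
    h _ _ (coe_ne_zero_of_not_mem_center u) (coe_ne_zero_of_not_mem_center v) hc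

variable [Fintype R]

theorem card_vertices_commutingGraph_add_one (hz : Set.center R = {0}) :
    Fintype.card {x : R // x ∉ Set.center R} + 1 = Fintype.card R := by
  rw [Fintype.card_subtype_compl, Fintype.card_congr (Equiv.setCongr hz),
    Fintype.card_unique (α := ({0} : Set R)), Nat.sub_add_cancel Fintype.card_pos]

theorem card_closedNbhd_commutingGraph (hz : Set.center R = {0})
    (v : {x : R // x ∉ Set.center R}) :
    #(univ.filter fun u => (commutingGraph R).Adj v u ∨ u = v) =
      #{w : R | w ≠ 0 ∧ Commute (v : R) w} := by
  refine card_bij (fun u _ => (u : R)) (fun u hu => ?_) (fun _ _ _ _ => Subtype.ext)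
    fun w hw => ?_
  · simp only [mem_filter, mem_univ, true_and, commutingGraph_adj_or_eq_iff] at hu ⊢
    exact ⟨coe_ne_zero_of_not_mem_center u, hu⟩
  · simp only [mem_filter, mem_univ, true_and] at hw
    refine ⟨⟨w, by simpa [hz] using hw.1⟩, ?_, rfl⟩
    simpa [commutingGraph_adj_or_eq_iff] using hw.2

theorem signedDominationNumber_commutingGraph_le (hz : Set.center R = {0}) {v₀ : R}
    (hv₀ : v₀ ≠ 0) (h : ∀ u : R, u ≠ 0 → Commute u v₀ → 2 < #{w : R | w ≠ 0 ∧ Commute u w}) :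
    (commutingGraph R).signedDominationNumber ≤ Fintype.card {x : R // x ∉ Set.center R} - 2 :=
  (commutingGraph R).signedDominationNumber_le_card_sub_two ⟨v₀, by simpa [hz] using hv₀⟩
    fun v hv => by
      convert h v (coe_ne_zero_of_not_mem_center v) (commutingGraph_adj_or_eq_iff.1 hv) using 1
      -- the two filters decide `u = v` by different instances
      convert card_closedNbhd_commutingGraph hz v

end

/-- Theorem D(i): for even `n`, `γₛ(Γ(R)) = n - 1` iff `R ≅ E` or `R ≅ F`. -/
theorem stmt_5 (R : Type*) [NonUnitalRing R] [Fintype R] (n : ℕ)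
    (hcard : Fintype.card R = n) (hn : Even n)
    (hnc : ∃ x y : R, x * y ≠ y * x)
    (hz : Set.center R = {0}) :
    (commutingGraph R).signedDominationNumber = (n : ℤ) - 1 ↔
      (Nonempty (R ≃+* Ering) ∨ Nonempty (R ≃+* Fring)) := by
  have hV := card_vertices_commutingGraph_add_one hz
  constructor
  · intro hγ
    by_contra hiso
    have hnt : ¬ HasTrivialCentralizers R := fun h => hiso (h.nonempty_ringEquiv hnc)
    obtain ⟨v₀, hv₀, hcomm⟩ := exists_ne_zero_forall_two_lt_card_commute (hcard ▸ hn) hnt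
    have := signedDominationNumber_commutingGraph_le hz hv₀ hcomm
    omega
  · intro hiso
    have h : HasTrivialCentralizers R := hiso.elim
      (fun ⟨φ⟩ => hasTrivialCentralizers_Ering.of_ringEquiv φ)
      (fun ⟨φ⟩ => hasTrivialCentralizers_Fring.of_ringEquiv φ)
    rw [(commutingGraph R).signedDominationNumber_eq_card_of_forall_not_adj
      h.not_adj_commutingGraph]
    omega
end
end

section
/- Let R be a finite non-commutative ring of order n with Z(R) = {0}. If γ(Γ̄(R)) = 1, then n = 2^t for some positive integer t. -/
open scoped Classical

noncomputable section

/-! If `{a}` dominates the non-commuting graph, the centralizer of `a` is contained in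
`Z(R) ∪ {a} = {0, a}`. It contains `2a`, forcing `2a = 0`, and then it contains `2x` for
every `x`, since `a (2x) = (2a) x = 0 = x (2a) = (2x) a`. Hence `4x = 0` for all `x`, so the
additive group of `R` is a `2`-group, and it is nontrivial because `a ≠ 0`. -/

theorem SimpleGraph.exists_isDominatingSet_card_eq_dominationNumber_s11 {V : Type*} [Fintype V]
    (G : SimpleGraph V) : ∃ D : Finset V, G.IsDominatingSet D ∧ D.card = G.dominationNumber :=
  Nat.sInf_mem (s := {n | ∃ D : Finset V, G.IsDominatingSet D ∧ D.card = n})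
    ⟨_, Finset.univ, fun v hv => absurd (Finset.mem_univ v) hv, rfl⟩

theorem mem_center_or_eq_of_commute_of_isDominatingSet {R : Type*} [NonUnitalRing R]
    {a : {x : R // x ∉ Set.center R}} (hdom : (commutingGraph R)ᶜ.IsDominatingSet {a})
    {x : R} (hx : Commute (a : R) x) : x ∈ Set.center R ∨ x = a := by
  by_contra! hcon
  obtain ⟨u, hu, hadj⟩ := hdom ⟨x, hcon.1⟩ (by simpa [Subtype.ext_iff] using hcon.2)
  rw [Finset.mem_singleton] at hu
  subst hu
  exact (SimpleGraph.compl_adj _ _ _).mp hadj |>.2 ⟨hadj.ne, hx⟩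

theorem four_nsmul_eq_zero_of_forall_commute {R : Type*} [NonUnitalRing R] {a : R} (ha : a ≠ 0)
    (hcent : ∀ x, Commute a x → x = 0 ∨ x = a) (x : R) : 4 • x = 0 := by
  have h2a : a + a = 0 := by
    rcases hcent (a + a) ((Commute.refl a).add_right (Commute.refl a)) with h | h
    · exact h
    · exact absurd (add_eq_right.mp h) ha
  have h2x : x + x = 0 ∨ x + x = a := hcent (x + x) <| by
    rw [Commute, SemiconjBy, mul_add, ← add_mul, h2a, add_mul, ← mul_add, h2a, zero_mul, mul_zero]
  have h4x : 4 • x = (x + x) + (x + x) := by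
    rw [show (4 : ℕ) = 2 + 2 from rfl, add_nsmul, two_nsmul]
  rcases h2x with h | h <;> simp [h4x, h, h2a]

theorem exists_card_eq_prime_pow_of_forall_nsmul_eq_zero {A : Type*} [AddGroup A] [Finite A]
    {p k : ℕ} [Fact p.Prime] (h : ∀ x : A, p ^ k • x = 0) : ∃ t, Nat.card A = p ^ t :=
  (IsPGroup.iff_card (G := Multiplicative A)).mp fun x => ⟨k, congrArg Multiplicative.ofAdd (h x)⟩

theorem stmt_11_general (R : Type*) [NonUnitalRing R] [Fintype R] (n : ℕ)
    (hcard : Fintype.card R = n)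
    (hz : Set.center R = {0})
    (h : ((commutingGraph R)ᶜ).dominationNumber = 1) :
    ∃ t : ℕ, 0 < t ∧ n = 2 ^ t := by
  obtain ⟨D, hdom, hD⟩ := ((commutingGraph R)ᶜ).exists_isDominatingSet_card_eq_dominationNumber_s11
  obtain ⟨a, rfl⟩ := Finset.card_eq_one.mp (hD.trans h)
  have ha : (a : R) ≠ 0 := fun h0 => a.2 (h0 ▸ Set.zero_mem_center)
  have h4 : ∀ x : R, 2 ^ 2 • x = 0 := four_nsmul_eq_zero_of_forall_commute ha fun x hx => by
    simpa [hz] using mem_center_or_eq_of_commute_of_isDominatingSet hdom hx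
  have : Fact (Nat.Prime 2) := ⟨Nat.prime_two⟩
  obtain ⟨t, ht⟩ := exists_card_eq_prime_pow_of_forall_nsmul_eq_zero h4
  have : Nontrivial R := ⟨⟨a, 0, ha⟩⟩
  refine ⟨t, Nat.pos_of_ne_zero fun ht0 => ?_, by rw [← hcard, ← Nat.card_eq_fintype_card, ht]⟩
  exact Finite.one_lt_card.ne' (by rw [ht, ht0, pow_zero])

/-- If `γ(Γ̄(R)) = 1` then `|R| = 2^t` for some positive integer `t`. -/
theorem stmt_11 (R : Type*) [NonUnitalRing R] [Fintype R] (n : ℕ)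
    (hcard : Fintype.card R = n)
    (hnc : ∃ x y : R, x * y ≠ y * x)
    (hz : Set.center R = {0})
    (h : ((commutingGraph R)ᶜ).dominationNumber = 1) :
    ∃ t : ℕ, 0 < t ∧ n = 2 ^ t :=
  stmt_11_general R n hcard hz h
end
end

section
/- Let R be a finite non-commutative ring of order n with Z(R) = {0}. Then γ(Γ̄(R)) < (n-1)/2. -/
open scoped Classical

noncomputable section

/-!
Pick a non-central `x`. Every vertex outside the centralizer `C(x)` fails to commute with `x`,
so it is adjacent to `x` in the non-commuting graph; hence the non-central elements of `C(x)`
form a dominating set, of size at most `|C(x)| - 1` because `0` is central. Since `C(x)` is a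
proper additive subgroup, Lagrange gives `2 |C(x)| ≤ n`, so `2 γ ≤ n - 2`.
-/

open Finset

theorem SimpleGraph.dominationNumber_le_card_s13 {V : Type*} [Fintype V] {G : SimpleGraph V}
    {D : Finset V} (hD : G.IsDominatingSet D) : G.dominationNumber ≤ #D :=
  Nat.sInf_le ⟨D, hD, rfl⟩

theorem AddSubgroup.two_mul_card_le_card_of_ne_top {G : Type*} [AddGroup G] [Finite G]
    {H : AddSubgroup G} (hH : H ≠ ⊤) : 2 * Nat.card H ≤ Nat.card G := by
  rw [← H.card_mul_index, mul_comm]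
  exact Nat.mul_le_mul_left _ (H.one_lt_index_of_ne_top hH)

section CommutingGraph

variable {R : Type*} [NonUnitalRing R] [Fintype R]

def commutingNeighbors (x : R) : Finset {v : R // v ∉ Set.center R} :=
  {v | (v : R) ∈ NonUnitalSubring.centralizer {x}}

theorem isDominatingSet_compl_commutingGraph (x : {v : R // v ∉ Set.center R}) :
    (commutingGraph R)ᶜ.IsDominatingSet (commutingNeighbors (x : R)) := by
  intro v hv
  have hvx : (x : R) * v ≠ v * x := by
    simpa [commutingNeighbors, NonUnitalSubring.mem_centralizer_iff] using hv
  refine ⟨x, by simp [commutingNeighbors, NonUnitalSubring.mem_centralizer_iff], ?_⟩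
  rw [SimpleGraph.compl_adj]
  exact ⟨fun h => hvx (h ▸ rfl), fun h => hvx h.2⟩

theorem card_commutingNeighbors_lt (x : R) :
    #(commutingNeighbors x) < Nat.card (NonUnitalSubring.centralizer {x}) := by
  rw [Nat.card_eq_fintype_card, Fintype.card_subtype]
  refine (card_le_card_of_injOn Subtype.val (fun v hv => ?_) Subtype.val_injective.injOn).trans_lt
    (card_erase_lt_of_mem (s := {v | v ∈ NonUnitalSubring.centralizer {x}}) (a := 0) (by simp))
  exact mem_erase.mpr
    ⟨fun hv0 => v.2 (hv0 ▸ Set.zero_mem_center), by simpa [commutingNeighbors] using hv⟩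

end CommutingGraph

theorem stmt_13_general (R : Type*) [NonUnitalRing R] [Fintype R] (n : ℕ)
    (hcard : Fintype.card R = n)
    (hnc : ∃ x y : R, x * y ≠ y * x) :
    2 * ((commutingGraph R)ᶜ).dominationNumber < n - 1 := by
  obtain ⟨x, y, hxy⟩ := hnc
  have hx : x ∉ Set.center R := fun h => hxy (Semigroup.mem_center_iff.mp h y).symm
  have hy : y ∉ NonUnitalSubring.centralizer {x} := fun h =>
    hxy (NonUnitalSubring.mem_centralizer_iff.mp h x rfl)
  have hhalf : 2 * Nat.card (NonUnitalSubring.centralizer {x}) ≤ n := by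
    rw [← hcard, ← Nat.card_eq_fintype_card]
    exact AddSubgroup.two_mul_card_le_card_of_ne_top
      (H := (NonUnitalSubring.centralizer {x}).toAddSubgroup)
      fun h => hy ((AddSubgroup.eq_top_iff' _).mp h y)
  have hγ : _ ≤ #(commutingNeighbors x) :=
    SimpleGraph.dominationNumber_le_card_s13 (isDominatingSet_compl_commutingGraph ⟨x, hx⟩)
  have hlt := card_commutingNeighbors_lt x
  omega

/-- `γ(Γ̄(R)) < (n-1)/2`. -/
theorem stmt_13 (R : Type*) [NonUnitalRing R] [Fintype R] (n : ℕ)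
    (hcard : Fintype.card R = n)
    (hnc : ∃ x y : R, x * y ≠ y * x)
    (hz : Set.center R = {0}) :
    2 * ((commutingGraph R)ᶜ).dominationNumber < n - 1 :=
  stmt_13_general R n hcard hnc

end
end
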